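/- Let G be a group, K a normal subgroup of G with generating sets S and S', and H a subgroup of G containing K. Then the commutator subgroup K' equals the normal closure in H (i.e., the subgroup generated by H-conjugates) of the set of commutators [s,s'] with s ∈ S, s' ∈ S'. -/

import Mathlib

open scoped commutatorElement

/-! The subgroup `N` generated by the `H`-conjugates of the `⁅s, s'⁆` is normalized by `H`, hence
by `K`. Since elements of `K` normalize `N`, the identities `⁅a, bc⁆ = ⁅a, b⁆ · b⁅a, c⁆b⁻¹` and
`⁅a, b⁻¹⁆ = b⁻¹⁅b, a⁆b` show that `{y ∈ K | ⁅x, y⁆ ∈ N}` is all of `K` once it contains `S'`; applying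
this in each argument in turn gives `⁅K, K⁆ ≤ N`. The converse holds because `⁅K, K⁆` is normal. -/

namespace Subgroup

variable {G : Type*} [Group G] {N : Subgroup G}

theorem commutatorElement_mem_of_mem_closure_right {S : Set G}
    (hS : closure S ≤ normalizer (N : Set G)) {x : G} (hx : ∀ s ∈ S, ⁅x, s⁆ ∈ N) {y : G}
    (hy : y ∈ closure S) : ⁅x, y⁆ ∈ N := by
  induction hy using closure_induction with
  | mem s hs => exact hx s hs
  | one => simp
  | mul y z hy _ hxy hxz =>
    rw [commutatorElement_mul_right_eq_mul_conj]
    simpa only [mul_assoc] using N.mul_mem hxy ((mem_normalizer_iff.mp (hS hy) _).mp hxz)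
  | inv y hy hxy =>
    rw [commutatorElement_inv_right, ← commutatorElement_inv]
    exact (mem_normalizer_iff''.mp (hS hy) _).mp (N.inv_mem hxy)

theorem commutator_closure_le {S S' : Set G} (hS : closure S ≤ normalizer (N : Set G))
    (hS' : closure S' ≤ normalizer (N : Set G)) (h : ∀ s ∈ S, ∀ s' ∈ S', ⁅s, s'⁆ ∈ N) :
    ⁅closure S, closure S'⁆ ≤ N := by
  refine commutator_le.mpr fun x hx y hy ↦
    commutatorElement_mem_of_mem_closure_right hS' (fun s' hs' ↦ ?_) hy
  rw [← commutatorElement_inv]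
  refine N.inv_mem (commutatorElement_mem_of_mem_closure_right hS (fun s hs ↦ ?_) hx)
  rw [← commutatorElement_inv]
  exact N.inv_mem (h s hs s' hs')

end Subgroup

/-- If `K` is a normal subgroup of `G` with generating sets `S`, `S'`,
and `H` is a subgroup of `G` containing `K`, then the commutator subgroup `K'`
equals the subgroup generated by the `H`-conjugates of the commutators `⁅s,s'⁆`,
`s ∈ S`, `s' ∈ S'`. -/
theorem stmt_1 {G : Type*} [Group G] (K H : Subgroup G) [K.Normal] (hKH : K ≤ H)
    (S S' : Set G) (hS : Subgroup.closure S = K) (hS' : Subgroup.closure S' = K) :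
    ⁅K, K⁆ =
      Subgroup.closure {g : G | ∃ h ∈ H, ∃ s ∈ S, ∃ s' ∈ S', g = h * ⁅s, s'⁆ * h⁻¹} := by
  set N := Subgroup.closure {g : G | ∃ h ∈ H, ∃ s ∈ S, ∃ s' ∈ S', g = h * ⁅s, s'⁆ * h⁻¹}
  have hHN : H ≤ Subgroup.normalizer (N : Set G) := by
    refine Subgroup.le_normalizer_closure_iff.mpr ?_
    rintro h hh _ ⟨h', hh', s, hs, s', hs', rfl⟩
    exact Subgroup.subset_closure ⟨h * h', H.mul_mem hh hh', s, hs, s', hs', by group⟩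
  apply le_antisymm
  · have hKN : K ≤ Subgroup.normalizer (N : Set G) := hKH.trans hHN
    calc ⁅K, K⁆ = ⁅Subgroup.closure S, Subgroup.closure S'⁆ := by rw [hS, hS']
      _ ≤ N := Subgroup.commutator_closure_le (hS ▸ hKN) (hS' ▸ hKN) fun s hs s' hs' ↦ ?_
    exact Subgroup.subset_closure ⟨1, H.one_mem, s, hs, s', hs', by group⟩
  · rw [Subgroup.closure_le]
    rintro _ ⟨h, -, s, hs, s', hs', rfl⟩
    have hss' : ⁅s, s'⁆ ∈ ⁅K, K⁆ := Subgroup.commutator_mem_commutator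
      (hS ▸ Subgroup.subset_closure hs) (hS' ▸ Subgroup.subset_closure hs')
    exact (Subgroup.commutator_normal K K).conj_mem _ hss' h
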